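/- Let μ, μ_m be non-atomic Borel probability measures on [0,1] with distribution functions F(x) = μ([0,x]) and F_m(x) = μ_m([0,x]). Then for every z ∈ ℝ there exists a constant c(z) > 0 depending only on z (one may take c(z) = 2(z² + |z|³) e^{z²}) such that sup_{x∈[0,1]} |cq_z(x) − cq_{z,m}(x)| ≤ c(z) ‖F − F_m‖_∞, sup_{x∈[0,1]} |cp_z(x) − cp_{z,m}(x)| ≤ c(z) ‖F − F_m‖_∞, sup_{x∈[0,1]} |sq_z(x) − sq_{z,m}(x)| ≤ c(z) ‖F − F_m‖_∞, and sup_{x∈[0,1]} |sp_z(x) − sp_{z,m}(x)| ≤ c(z) ‖F − F_m‖_∞. -/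

import Mathlib

open MeasureTheory Real Filter

/-- Iterated integrals `p_n` w.r.t. a measure `ν`: `p_0 = 1`,
`p_n(x) = ∫_0^x p_{n-1} dν` if `n` odd, `p_n(x) = ∫_0^x p_{n-1} dt` if `n` even. -/
noncomputable def pIter (ν : Measure ℝ) : ℕ → ℝ → ℝ
  | 0 => fun _ => 1
  | (n+1) => fun x =>
      if Odd (n+1) then ∫ t in Set.Ioc (0:ℝ) x, pIter ν n t ∂ν
      else ∫ t in Set.Ioc (0:ℝ) x, pIter ν n t

/-- Iterated integrals `q_n` w.r.t. a measure `ν`: `q_0 = 1`,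
`q_n(x) = ∫_0^x q_{n-1} dt` if `n` odd, `q_n(x) = ∫_0^x q_{n-1} dν` if `n` even. -/
noncomputable def qIter (ν : Measure ℝ) : ℕ → ℝ → ℝ
  | 0 => fun _ => 1
  | (n+1) => fun x =>
      if Odd (n+1) then ∫ t in Set.Ioc (0:ℝ) x, qIter ν n t
      else ∫ t in Set.Ioc (0:ℝ) x, qIter ν n t ∂ν

noncomputable def spF (ν : Measure ℝ) (z x : ℝ) : ℝ :=
  ∑' n : ℕ, (-1)^n * z^(2*n+1) * pIter ν (2*n+1) x

noncomputable def sqF (ν : Measure ℝ) (z x : ℝ) : ℝ :=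
  ∑' n : ℕ, (-1)^n * z^(2*n+1) * qIter ν (2*n+1) x

noncomputable def cpF (ν : Measure ℝ) (z x : ℝ) : ℝ :=
  ∑' n : ℕ, (-1)^n * z^(2*n) * pIter ν (2*n) x

noncomputable def cqF (ν : Measure ℝ) (z x : ℝ) : ℝ :=
  ∑' n : ℕ, (-1)^n * z^(2*n) * qIter ν (2*n) x

noncomputable def sinpF (ν : Measure ℝ) (z : ℝ) : ℝ := spF ν z 1
noncomputable def sinqF (ν : Measure ℝ) (z : ℝ) : ℝ := sqF ν z 1
noncomputable def cospF (ν : Measure ℝ) (z : ℝ) : ℝ := cpF ν z 1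
noncomputable def cosqF (ν : Measure ℝ) (z : ℝ) : ℝ := cqF ν z 1

/-- distribution function `F(x) = ν [0,x]` -/
noncomputable def distF (ν : Measure ℝ) (x : ℝ) : ℝ := (ν (Set.Icc 0 x)).toReal

/-- supremum distance of two functions over `[0,1]` -/
noncomputable def supDist (f g : ℝ → ℝ) : ℝ := ⨆ x : Set.Icc (0:ℝ) 1, |f x.1 - g x.1|


noncomputable def It (ν : Measure ℝ) (b : ℕ → Bool) : ℕ → ℝ → ℝ
  | 0 => fun _ => 1
  | (n+1) => fun x => if b n then ∫ t in Set.Ioc (0:ℝ) x, It ν b n t ∂ν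
      else ∫ t in Set.Ioc (0:ℝ) x, It ν b n t

def Lc (b : ℕ → Bool) : ℕ → ℕ
  | 0 => 0
  | (n+1) => Lc b n + (if b n then 0 else 1)

def dc (b : ℕ → Bool) : ℕ → ℕ
  | 0 => 0
  | (n+1) => dc b n + (if b n then 2 else 0)

instance finIoc (μ : Measure ℝ) [IsLocallyFiniteMeasure μ] (a b : ℝ) :
    IsFiniteMeasure (μ.restrict (Set.Ioc a b)) := by
  constructor
  rw [Measure.restrict_apply_univ]
  exact measure_Ioc_lt_top

lemma integrableOn_of_mono {μ : Measure ℝ} {f : ℝ → ℝ}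
    (hm : Monotone f) (h0 : ∀ x, 0 ≤ f x) (a b : ℝ)
    [IsFiniteMeasure (μ.restrict (Set.Ioc a b))] :
    IntegrableOn f (Set.Ioc a b) μ := by
  refine Integrable.mono' (integrable_const (f b)) (hm.measurable.aestronglyMeasurable) ?_
  filter_upwards [ae_restrict_mem measurableSet_Ioc] with t ht
  rw [Real.norm_eq_abs, abs_of_nonneg (h0 t)]
  exact hm ht.2

lemma It_mono_nonneg (ν : Measure ℝ) [IsFiniteMeasure ν] (b : ℕ → Bool) :
    ∀ n, Monotone (It ν b n) ∧ ∀ x, 0 ≤ It ν b n x := by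
  intro n
  induction n with
  | zero => exact ⟨monotone_const, fun _ => zero_le_one⟩
  | succ n ih =>
    obtain ⟨hm, h0⟩ := ih
    constructor
    · intro x y hxy
      simp only [It]
      split
      · exact setIntegral_mono_set (integrableOn_of_mono hm h0 0 y)
          (Eventually.of_forall h0) (HasSubset.Subset.eventuallyLE (Set.Ioc_subset_Ioc_right hxy))
      · exact setIntegral_mono_set (integrableOn_of_mono hm h0 0 y)
          (Eventually.of_forall h0) (HasSubset.Subset.eventuallyLE (Set.Ioc_subset_Ioc_right hxy))
    · intro x
      simp only [It]
      split
      · exact setIntegral_nonneg measurableSet_Ioc fun t _ => h0 t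
      · exact setIntegral_nonneg measurableSet_Ioc fun t _ => h0 t

lemma It_mono (ν : Measure ℝ) [IsFiniteMeasure ν] (b : ℕ → Bool) (n : ℕ) :
    Monotone (It ν b n) := (It_mono_nonneg ν b n).1

lemma It_nonneg (ν : Measure ℝ) [IsFiniteMeasure ν] (b : ℕ → Bool) (n : ℕ) (x : ℝ) :
    0 ≤ It ν b n x := (It_mono_nonneg ν b n).2 x

lemma It_integrableOn (ν : Measure ℝ) [IsFiniteMeasure ν] (b : ℕ → Bool) (n : ℕ)
    (μ : Measure ℝ) (a c : ℝ) [IsFiniteMeasure (μ.restrict (Set.Ioc a c))] :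
    IntegrableOn (It ν b n) (Set.Ioc a c) μ :=
  integrableOn_of_mono (It_mono ν b n) (It_nonneg ν b n) a c

lemma prob_toReal_le_one (ν : Measure ℝ) [IsProbabilityMeasure ν] (s : Set ℝ) :
    (ν s).toReal ≤ 1 := by
  have h := ENNReal.toReal_mono ENNReal.one_ne_top (prob_le_one (μ := ν) (s := s))
  simpa using h

lemma It_bound (ν : Measure ℝ) [IsProbabilityMeasure ν] (b : ℕ → Bool) :
    ∀ n, ∀ x ∈ Set.Icc (0:ℝ) 1, It ν b n x ≤ x ^ (Lc b n) / (Nat.factorial (Lc b n)) := by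
  intro n
  induction n with
  | zero => intro x _; simp [It, Lc]
  | succ n ih =>
    intro x hx
    obtain ⟨hx0, hx1⟩ := hx
    have hLpos : (0:ℝ) < Nat.factorial (Lc b n) := by positivity
    have hpt : ∀ t ∈ Set.Ioc (0:ℝ) x, It ν b n t ≤ t ^ (Lc b n) / Nat.factorial (Lc b n) := by
      intro t ht
      exact ih t ⟨le_of_lt ht.1, ht.2.trans hx1⟩
    have hptc : ∀ t ∈ Set.Ioc (0:ℝ) x, It ν b n t ≤ x ^ (Lc b n) / Nat.factorial (Lc b n) := by
      intro t ht
      refine (hpt t ht).trans ?_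
      gcongr
      exacts [le_of_lt ht.1, ht.2]
    cases hb : b n with
    | true =>
      simp only [It, Lc, hb, if_true, Nat.add_zero]
      calc ∫ t in Set.Ioc (0:ℝ) x, It ν b n t ∂ν
          ≤ ∫ _ in Set.Ioc (0:ℝ) x, x ^ (Lc b n) / Nat.factorial (Lc b n) ∂ν := by
            refine setIntegral_mono_on (It_integrableOn ν b n ν 0 x) (integrable_const _)
              measurableSet_Ioc hptc
        _ = (ν (Set.Ioc 0 x)).toReal • (x ^ (Lc b n) / Nat.factorial (Lc b n)) :=
            setIntegral_const _
        _ ≤ 1 * (x ^ (Lc b n) / Nat.factorial (Lc b n)) := by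
            rw [smul_eq_mul]
            have h1 : (0:ℝ) ≤ x ^ (Lc b n) / Nat.factorial (Lc b n) := by positivity
            exact mul_le_mul_of_nonneg_right (prob_toReal_le_one ν _) h1
        _ = x ^ (Lc b n) / Nat.factorial (Lc b n) := one_mul _
    | false =>
      simp only [It, Lc, hb, if_false]
      calc ∫ t in Set.Ioc (0:ℝ) x, It ν b n t
          ≤ ∫ t in Set.Ioc (0:ℝ) x, t ^ (Lc b n) / Nat.factorial (Lc b n) := by
            refine setIntegral_mono_on (It_integrableOn ν b n volume 0 x) ?_
              measurableSet_Ioc hpt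
            exact (Continuous.integrableOn_Ioc (by continuity))
        _ = x ^ (Lc b n + 1) / Nat.factorial (Lc b n + 1) := by
            rw [← intervalIntegral.integral_of_le hx0]
            rw [intervalIntegral.integral_div, integral_pow]
            rw [Nat.factorial_succ]
            push_cast
            field_simp
            simp

lemma fubini_key (ν : Measure ℝ) [IsFiniteMeasure ν] (h : ℝ → ℝ) (hm : Measurable h)
    (M : ℝ) (hb : ∀ t, |h t| ≤ M) (x : ℝ) :
    ∫ t in Set.Ioc (0:ℝ) x, (∫ s in Set.Ioc (0:ℝ) t, h s) ∂ν
      = ∫ s in Set.Ioc (0:ℝ) x, h s * (ν (Set.Icc s x)).toReal := by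
  have hmeas : Measurable fun p : ℝ × ℝ => if p.2 ≤ p.1 then h p.2 else 0 :=
    Measurable.ite (measurableSet_le measurable_snd measurable_fst)
      (hm.comp measurable_snd) measurable_const
  have hF : Integrable (fun p : ℝ × ℝ => if p.2 ≤ p.1 then h p.2 else 0)
      ((ν.restrict (Set.Ioc (0:ℝ) x)).prod (volume.restrict (Set.Ioc (0:ℝ) x))) := by
    refine Integrable.mono' (integrable_const M) hmeas.aestronglyMeasurable ?_
    refine Eventually.of_forall fun p => ?_
    by_cases hp : p.2 ≤ p.1
    · simpa [hp, Real.norm_eq_abs] using hb p.2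
    · simpa [hp, Real.norm_eq_abs] using (abs_nonneg (h p.2)).trans (hb p.2)
  have swap := integral_integral_swap (f := fun t s : ℝ => if s ≤ t then h s else 0) hF
  calc ∫ t in Set.Ioc (0:ℝ) x, (∫ s in Set.Ioc (0:ℝ) t, h s) ∂ν
      = ∫ t in Set.Ioc (0:ℝ) x,
          (∫ s in Set.Ioc (0:ℝ) x, if s ≤ t then h s else 0) ∂ν := by
        refine setIntegral_congr_fun measurableSet_Ioc fun t ht => ?_
        have : ∀ s : ℝ, (if s ≤ t then h s else 0) = Set.indicator (Set.Iic t) h s := by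
          intro s; simp [Set.indicator_apply]
        simp_rw [this]
        rw [setIntegral_indicator measurableSet_Iic, Set.Ioc_inter_Iic, min_eq_right ht.2]
    _ = ∫ s in Set.Ioc (0:ℝ) x,
          (∫ t in Set.Ioc (0:ℝ) x, if s ≤ t then h s else 0 ∂ν) := swap
    _ = ∫ s in Set.Ioc (0:ℝ) x, h s * (ν (Set.Icc s x)).toReal := by
        refine setIntegral_congr_fun measurableSet_Ioc fun s hs => ?_
        have : ∀ t : ℝ, (if s ≤ t then h s else 0)
            = Set.indicator (Set.Ici s) (fun _ => h s) t := by
          intro t; simp [Set.indicator_apply]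
        simp_rw [this]
        rw [setIntegral_indicator measurableSet_Ici]
        have hset : Set.Ioc (0:ℝ) x ∩ Set.Ici s = Set.Icc s x := by
          ext t
          simp only [Set.mem_inter_iff, Set.mem_Ioc, Set.mem_Ici, Set.mem_Icc]
          constructor
          · rintro ⟨⟨_, h2⟩, h3⟩; exact ⟨h3, h2⟩
          · rintro ⟨h1, h2⟩; exact ⟨⟨lt_of_lt_of_le hs.1 h1, h2⟩, h1⟩
        rw [hset, setIntegral_const, smul_eq_mul, mul_comm]
        rfl


lemma distF_nonneg (ν : Measure ℝ) (x : ℝ) : 0 ≤ distF ν x := ENNReal.toReal_nonneg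

lemma distF_le_one (ν : Measure ℝ) [IsProbabilityMeasure ν] (x : ℝ) : distF ν x ≤ 1 :=
  prob_toReal_le_one ν _

lemma supDist_nonneg (ν ν' : Measure ℝ) : 0 ≤ supDist (distF ν) (distF ν') := by
  refine Real.iSup_nonneg fun x => abs_nonneg _

lemma distF_diff_le (ν ν' : Measure ℝ) [IsProbabilityMeasure ν] [IsProbabilityMeasure ν']
    {x : ℝ} (hx : x ∈ Set.Icc (0:ℝ) 1) :
    |distF ν x - distF ν' x| ≤ supDist (distF ν) (distF ν') := by
  have hbdd : BddAbove (Set.range fun y : Set.Icc (0:ℝ) 1 => |distF ν y.1 - distF ν' y.1|) := by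
    refine ⟨2, ?_⟩
    rintro r ⟨y, rfl⟩
    calc |distF ν y.1 - distF ν' y.1| ≤ |distF ν y.1| + |distF ν' y.1| := abs_sub _ _
      _ ≤ 1 + 1 := by
          gcongr
          · rw [abs_of_nonneg (distF_nonneg ν _)]; exact distF_le_one ν _
          · rw [abs_of_nonneg (distF_nonneg ν' _)]; exact distF_le_one ν' _
      _ = 2 := by norm_num
  exact le_ciSup hbdd (⟨x, hx⟩ : Set.Icc (0:ℝ) 1)

lemma meas_insert_null (ν : Measure ℝ) [NullSingletonClass ν] (a : ℝ) (S : Set ℝ) :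
    ν (insert a S) = ν S := by
  refine le_antisymm ?_ (measure_mono (Set.subset_insert a S))
  rw [Set.insert_eq]
  calc ν ({a} ∪ S) ≤ ν {a} + ν S := measure_union_le _ _
    _ = ν S := by rw [measure_singleton, zero_add]

lemma toReal_Ioc (ν : Measure ℝ) [NullSingletonClass ν] {x : ℝ} (hx : 0 ≤ x) :
    (ν (Set.Ioc 0 x)).toReal = distF ν x := by
  rw [distF, ← Set.Ioc_insert_left hx, meas_insert_null]

lemma toReal_Icc_diff (ν : Measure ℝ) [NullSingletonClass ν] [IsProbabilityMeasure ν]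
    {s x : ℝ} (hs : 0 ≤ s) (hsx : s ≤ x) :
    (ν (Set.Icc s x)).toReal = distF ν x - distF ν s := by
  have hdisj : Disjoint (Set.Icc 0 s) (Set.Ioc s x) := by
    rw [Set.disjoint_left]
    rintro t ⟨_, ht2⟩ ⟨ht3, _⟩
    exact absurd ht2 (not_le.mpr ht3)
  have h1 : ν (Set.Icc 0 s) + ν (Set.Ioc s x) = ν (Set.Icc 0 x) := by
    rw [← measure_union hdisj measurableSet_Ioc, Set.Icc_union_Ioc_eq_Icc hs hsx]
  have h2 : ν (Set.Ioc s x) = ν (Set.Icc s x) := by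
    rw [← Set.Ioc_insert_left hsx, meas_insert_null]
  rw [h2] at h1
  have h3 := congrArg ENNReal.toReal h1
  rw [ENNReal.toReal_add (measure_ne_top ν _) (measure_ne_top ν _)] at h3
  simp only [distF]
  linarith

lemma Icc_diff_bound (ν ν' : Measure ℝ) [IsProbabilityMeasure ν] [IsProbabilityMeasure ν']
    [NullSingletonClass ν] [NullSingletonClass ν'] {s x : ℝ} (hs : s ∈ Set.Ioc (0:ℝ) x) (hx : x ∈ Set.Icc (0:ℝ) 1) :
    |(ν (Set.Icc s x)).toReal - (ν' (Set.Icc s x)).toReal|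
      ≤ 2 * supDist (distF ν) (distF ν') := by
  have hs0 : (0:ℝ) ≤ s := le_of_lt hs.1
  rw [toReal_Icc_diff ν hs0 hs.2, toReal_Icc_diff ν' hs0 hs.2]
  have h1 := distF_diff_le ν ν' hx
  have h2 := distF_diff_le ν ν' (⟨hs0, hs.2.trans hx.2⟩ : s ∈ Set.Icc (0:ℝ) 1)
  calc |distF ν x - distF ν s - (distF ν' x - distF ν' s)|
      = |(distF ν x - distF ν' x) - (distF ν s - distF ν' s)| := by ring_nf
    _ ≤ |distF ν x - distF ν' x| + |distF ν s - distF ν' s| := abs_sub _ _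
    _ ≤ 2 * supDist (distF ν) (distF ν') := by linarith

lemma nu_integral_diff (ν ν' : Measure ℝ) [IsProbabilityMeasure ν] [IsProbabilityMeasure ν']
    [NullSingletonClass ν] [NullSingletonClass ν'] (f : ℝ → ℝ) (hmono : Monotone f) (hnon : ∀ t, 0 ≤ f t)
    {x : ℝ} (hx : x ∈ Set.Icc (0:ℝ) 1) :
    |(∫ t in Set.Ioc (0:ℝ) x, (∫ s in Set.Ioc (0:ℝ) t, f s) ∂ν)
      - ∫ t in Set.Ioc (0:ℝ) x, (∫ s in Set.Ioc (0:ℝ) t, f s) ∂ν'|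
      ≤ 2 * supDist (distF ν) (distF ν') * ∫ s in Set.Ioc (0:ℝ) x, f s := by
  set δ := supDist (distF ν) (distF ν') with hδ
  have hδ0 : 0 ≤ δ := supDist_nonneg ν ν'
  set h' : ℝ → ℝ := (Set.Ioc (0:ℝ) x).indicator f with hh'
  have hM : ∀ t, |h' t| ≤ f x := by
    intro t
    by_cases ht : t ∈ Set.Ioc (0:ℝ) x
    · rw [hh', Set.indicator_of_mem ht, abs_of_nonneg (hnon t)]
      exact hmono ht.2
    · rw [hh', Set.indicator_of_notMem ht, abs_zero]
      exact hnon x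
  have hm' : Measurable h' := (hmono.measurable).indicator measurableSet_Ioc
  have key : ∀ μ : Measure ℝ, IsFiniteMeasure μ →
      ∫ t in Set.Ioc (0:ℝ) x, (∫ s in Set.Ioc (0:ℝ) t, f s) ∂μ
        = ∫ s in Set.Ioc (0:ℝ) x, h' s * (μ (Set.Icc s x)).toReal := by
    intro μ hfin
    rw [← fubini_key μ h' hm' (f x) hM x]
    refine setIntegral_congr_fun measurableSet_Ioc fun t ht => ?_
    rw [hh', setIntegral_indicator measurableSet_Ioc]
    congr 1
    rw [Set.Ioc_inter_Ioc]
    simp [min_eq_left ht.2]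
  have measA : ∀ μ : Measure ℝ, IsProbabilityMeasure μ →
      Measurable (fun s => (μ (Set.Icc s x)).toReal) := by
    intro μ hp
    refine Antitone.measurable fun s s' hss' => ?_
    exact ENNReal.toReal_mono (measure_ne_top μ _)
      (measure_mono (Set.Icc_subset_Icc_left hss'))
  have boundA : ∀ (μ : Measure ℝ), IsProbabilityMeasure μ →
      ∀ s, |(μ (Set.Icc s x)).toReal| ≤ 1 := by
    intro μ hp s
    rw [abs_of_nonneg ENNReal.toReal_nonneg]
    exact prob_toReal_le_one μ _
  have intg : ∀ μ : Measure ℝ, IsProbabilityMeasure μ →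
      IntegrableOn (fun s => h' s * (μ (Set.Icc s x)).toReal) (Set.Ioc (0:ℝ) x) volume := by
    intro μ hp
    refine Integrable.mono' (integrable_const (f x * 1))
      ((hm'.mul (measA μ hp)).aestronglyMeasurable) ?_
    refine Eventually.of_forall fun s => ?_
    rw [Real.norm_eq_abs, abs_mul]
    exact mul_le_mul (hM s) (boundA μ hp s) (abs_nonneg _) ((abs_nonneg _).trans (hM x))
  rw [key ν inferInstance, key ν' inferInstance, ← integral_sub (intg ν inferInstance) (intg ν' inferInstance)]
  have inth' : IntegrableOn h' (Set.Ioc (0:ℝ) x) volume := by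
    refine Integrable.mono' (integrable_const (f x)) hm'.aestronglyMeasurable ?_
    exact Eventually.of_forall fun s => hM s
  have step1 : |∫ s in Set.Ioc (0:ℝ) x,
        (h' s * (ν (Set.Icc s x)).toReal - h' s * (ν' (Set.Icc s x)).toReal)|
      ≤ ∫ s in Set.Ioc (0:ℝ) x, h' s * (2 * δ) := by
    rw [← Real.norm_eq_abs]
    refine (norm_integral_le_integral_norm _).trans ?_
    refine setIntegral_mono_on ((intg ν inferInstance).sub (intg ν' inferInstance)).norm
      (inth'.mul_const _) measurableSet_Ioc ?_
    intro s hs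
    rw [Real.norm_eq_abs, ← mul_sub, abs_mul,
      abs_of_nonneg (Set.indicator_nonneg (fun t _ => hnon t) s)]
    exact mul_le_mul_of_nonneg_left (Icc_diff_bound ν ν' hs hx)
      (Set.indicator_nonneg (fun t _ => hnon t) s)
  refine step1.trans ?_
  have : ∫ s in Set.Ioc (0:ℝ) x, h' s * (2 * δ)
      = 2 * δ * ∫ s in Set.Ioc (0:ℝ) x, f s := by
    rw [integral_mul_const]
    rw [setIntegral_congr_fun measurableSet_Ioc
      (fun s hs => by rw [hh', Set.indicator_of_mem hs] : Set.EqOn h' f (Set.Ioc 0 x))]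
    ring
  rw [this]

lemma It_diff (ν ν' : Measure ℝ) [IsProbabilityMeasure ν] [IsProbabilityMeasure ν']
    [NullSingletonClass ν] [NullSingletonClass ν'] (b : ℕ → Bool) (halt : ∀ n, b (n+1) = true → b n = false) :
    ∀ n, ∀ x ∈ Set.Icc (0:ℝ) 1,
      |It ν b n x - It ν' b n x|
        ≤ dc b n * supDist (distF ν) (distF ν') * x ^ Lc b n / Nat.factorial (Lc b n) := by
  set δ := supDist (distF ν) (distF ν') with hδ
  have hδ0 : 0 ≤ δ := supDist_nonneg ν ν'
  intro n
  induction n with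
  | zero => intro x hx; simp [It, dc, Lc]
  | succ n ih =>
    intro x hx
    obtain ⟨hx0, hx1⟩ := hx
    have hfac : (0:ℝ) < Nat.factorial (Lc b n) := by positivity
    have hxp : (0:ℝ) ≤ x ^ Lc b n := by positivity
    cases hb : b n with
    | false =>
      simp only [It, dc, Lc, hb, if_false, Nat.add_zero, Bool.false_eq_true]
      rw [← integral_sub (It_integrableOn ν b n volume 0 x) (It_integrableOn ν' b n volume 0 x),
        ← Real.norm_eq_abs]
      refine (norm_integral_le_integral_norm _).trans ?_
      calc ∫ t in Set.Ioc (0:ℝ) x, ‖It ν b n t - It ν' b n t‖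
          ≤ ∫ t in Set.Ioc (0:ℝ) x, dc b n * δ * t ^ Lc b n / Nat.factorial (Lc b n) := by
            refine setIntegral_mono_on
              (((It_integrableOn ν b n volume 0 x).sub (It_integrableOn ν' b n volume 0 x)).norm)
              (Continuous.integrableOn_Ioc (by continuity)) measurableSet_Ioc ?_
            intro t ht
            rw [Real.norm_eq_abs]
            exact ih t ⟨le_of_lt ht.1, ht.2.trans hx1⟩
        _ = dc b n * δ * x ^ (Lc b n + 1) / Nat.factorial (Lc b n + 1) := by
            rw [← intervalIntegral.integral_of_le hx0]
            have hrw : ∀ t:ℝ, dc b n * δ * t ^ Lc b n / Nat.factorial (Lc b n)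
                = (dc b n * δ / Nat.factorial (Lc b n)) * t ^ Lc b n := by intro t; ring
            simp_rw [hrw]
            rw [intervalIntegral.integral_const_mul, integral_pow]
            have hfs : ((Lc b n + 1).factorial : ℝ) = ((Lc b n : ℝ) + 1) * (Lc b n).factorial := by
              rw [Nat.factorial_succ]; push_cast; ring
            rw [hfs, zero_pow (Nat.succ_ne_zero _), sub_zero]
            have h1 : ((Lc b n : ℝ) + 1) ≠ 0 := by positivity
            have h2 : ((Lc b n).factorial : ℝ) ≠ 0 := ne_of_gt hfac
            push_cast
            field_simp
    | true =>
      have hLc : Lc b (n+1) = Lc b n := by simp [Lc, hb]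
      have hdc : dc b (n+1) = dc b n + 2 := by simp [dc, hb]
      have hIt1 : It ν b (n+1) x = ∫ t in Set.Ioc (0:ℝ) x, It ν b n t ∂ν := by
        simp [It, hb]
      have hIt2 : It ν' b (n+1) x = ∫ t in Set.Ioc (0:ℝ) x, It ν' b n t ∂ν' := by
        simp [It, hb]
      have T1 : |(∫ t in Set.Ioc (0:ℝ) x, It ν b n t ∂ν)
          - ∫ t in Set.Ioc (0:ℝ) x, It ν' b n t ∂ν|
          ≤ dc b n * δ * x ^ Lc b n / Nat.factorial (Lc b n) := by
        rw [← integral_sub (It_integrableOn ν b n ν 0 x) (It_integrableOn ν' b n ν 0 x),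
          ← Real.norm_eq_abs]
        refine (norm_integral_le_integral_norm _).trans ?_
        calc ∫ t in Set.Ioc (0:ℝ) x, ‖It ν b n t - It ν' b n t‖ ∂ν
            ≤ ∫ _ in Set.Ioc (0:ℝ) x, dc b n * δ * x ^ Lc b n / Nat.factorial (Lc b n) ∂ν := by
              refine setIntegral_mono_on
                (((It_integrableOn ν b n ν 0 x).sub (It_integrableOn ν' b n ν 0 x)).norm)
                (integrable_const _) measurableSet_Ioc ?_
              intro t ht
              rw [Real.norm_eq_abs]
              refine (ih t ⟨le_of_lt ht.1, ht.2.trans hx1⟩).trans ?_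
              gcongr <;> first | exact hδ0 | exact le_of_lt ht.1 | exact ht.2 | positivity
          _ = (ν (Set.Ioc 0 x)).toReal • (dc b n * δ * x ^ Lc b n / Nat.factorial (Lc b n)) :=
              setIntegral_const _
          _ ≤ 1 * (dc b n * δ * x ^ Lc b n / Nat.factorial (Lc b n)) := by
              rw [smul_eq_mul]
              have h1 : (0:ℝ) ≤ dc b n * δ * x ^ Lc b n / Nat.factorial (Lc b n) := by positivity
              exact mul_le_mul_of_nonneg_right (prob_toReal_le_one ν _) h1
          _ = dc b n * δ * x ^ Lc b n / Nat.factorial (Lc b n) := one_mul _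
      have T2 : |(∫ t in Set.Ioc (0:ℝ) x, It ν' b n t ∂ν)
          - ∫ t in Set.Ioc (0:ℝ) x, It ν' b n t ∂ν'|
          ≤ 2 * δ * x ^ Lc b n / Nat.factorial (Lc b n) := by
        cases n with
        | zero =>
          simp only [It, Lc, pow_zero, Nat.factorial_zero, Nat.cast_one, div_one, mul_one]
          rw [integral_const, integral_const, smul_eq_mul, smul_eq_mul, mul_one, mul_one,
            measureReal_def, measureReal_def, Measure.restrict_apply_univ, Measure.restrict_apply_univ,
            toReal_Ioc ν hx0, toReal_Ioc ν' hx0]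
          have := distF_diff_le ν ν' ⟨hx0, hx1⟩
          linarith
        | succ m =>
          have hbm : b m = false := halt m hb
          have hrep : ∀ μ : Measure ℝ, ∫ t in Set.Ioc (0:ℝ) x, It ν' b (m+1) t ∂μ
              = ∫ t in Set.Ioc (0:ℝ) x, (∫ s in Set.Ioc (0:ℝ) t, It ν' b m s) ∂μ := by
            intro μ
            congr 1
            funext t
            simp [It, hbm]
          rw [hrep ν, hrep ν']
          refine (nu_integral_diff ν ν' (It ν' b m) (It_mono ν' b m) (It_nonneg ν' b m)
            ⟨hx0, hx1⟩).trans ?_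
          have : ∫ s in Set.Ioc (0:ℝ) x, It ν' b m s = It ν' b (m+1) x := by
            simp [It, hbm]
          rw [this]
          have hbd := It_bound ν' b (m+1) x ⟨hx0, hx1⟩
          calc 2 * δ * It ν' b (m+1) x
              ≤ 2 * δ * (x ^ Lc b (m+1) / Nat.factorial (Lc b (m+1))) := by
                exact mul_le_mul_of_nonneg_left hbd (by linarith)
            _ = 2 * δ * x ^ Lc b (m+1) / Nat.factorial (Lc b (m+1)) := by ring
      rw [hIt1, hIt2, hLc, hdc]
      have tri := abs_sub_le (∫ t in Set.Ioc (0:ℝ) x, It ν b n t ∂ν)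
        (∫ t in Set.Ioc (0:ℝ) x, It ν' b n t ∂ν)
        (∫ t in Set.Ioc (0:ℝ) x, It ν' b n t ∂ν')
      push_cast
      have expand : (dc b n + 2 : ℝ) * δ * x ^ Lc b n / Nat.factorial (Lc b n)
          = dc b n * δ * x ^ Lc b n / Nat.factorial (Lc b n)
            + 2 * δ * x ^ Lc b n / Nat.factorial (Lc b n) := by ring
      rw [expand]
      linarith

def bP (k : ℕ) : Bool := decide (Even k)
def bQ (k : ℕ) : Bool := decide (Odd k)

lemma Lc_succ (b : ℕ → Bool) (n : ℕ) : Lc b (n+1) = Lc b n + (if b n then 0 else 1) := rfl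
lemma dc_succ (b : ℕ → Bool) (n : ℕ) : dc b (n+1) = dc b n + (if b n then 2 else 0) := rfl

lemma bP_even (n : ℕ) : bP (2*n) = true := by simp [bP]
lemma bP_odd (n : ℕ) : bP (2*n+1) = false := by simp [bP, Nat.even_add_one]
lemma bQ_even (n : ℕ) : bQ (2*n) = false := by simp [bQ, Nat.not_odd_iff_even]
lemma bQ_odd (n : ℕ) : bQ (2*n+1) = true := by simp [bQ, Nat.odd_add_one, Nat.not_odd_iff_even]

lemma pIter_eq (ν : Measure ℝ) : ∀ n, pIter ν n = It ν bP n := by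
  intro n
  induction n with
  | zero => rfl
  | succ n ih =>
    funext x
    simp only [pIter, It, ih]
    by_cases h : Even n
    · rw [if_pos (by rw [Nat.odd_add_one, Nat.not_odd_iff_even]; exact h),
        if_pos (by simpa [bP] using h)]
    · rw [if_neg (by rw [Nat.odd_add_one, Nat.not_odd_iff_even]; exact h),
        if_neg (by simpa [bP] using h)]

lemma qIter_eq (ν : Measure ℝ) : ∀ n, qIter ν n = It ν bQ n := by
  intro n
  induction n with
  | zero => rfl
  | succ n ih =>
    funext x
    simp only [qIter, It, ih]
    by_cases h : Odd n
    · rw [if_neg (by rw [Nat.odd_add_one]; exact not_not.mpr h),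
        if_pos (by simpa [bQ] using h)]
    · rw [if_pos (Nat.odd_add_one.mpr h), if_neg (by simpa [bQ] using h)]

lemma haltP : ∀ n, bP (n+1) = true → bP n = false := by
  intro n h
  simp only [bP, decide_eq_true_eq] at h
  simp [bP, Nat.even_add_one.mp h]

lemma haltQ : ∀ n, bQ (n+1) = true → bQ n = false := by
  intro n h
  simp only [bQ, decide_eq_true_eq] at h
  simp [bQ, Nat.odd_add_one.mp h]

lemma LcdcP : ∀ n, (Lc bP (2*n) = n ∧ dc bP (2*n) = 2*n)
    ∧ (Lc bP (2*n+1) = n ∧ dc bP (2*n+1) = 2*n+2) := by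
  intro n
  induction n with
  | zero => simp [Lc, dc, Lc_succ, dc_succ, bP]
  | succ n ih =>
    obtain ⟨⟨_, _⟩, ⟨h3, h4⟩⟩ := ih
    have e1 : 2*(n+1) = (2*n+1)+1 := by ring
    have g1 : Lc bP (2*(n+1)) = n+1 := by
      rw [e1, Lc_succ, bP_odd, h3]; simp
    have g2 : dc bP (2*(n+1)) = 2*(n+1) := by
      rw [e1, dc_succ, bP_odd, h4]; simp; try ring
    refine ⟨⟨g1, g2⟩, ?_, ?_⟩
    · rw [Lc_succ, bP_even, g1]; simp
    · rw [dc_succ, bP_even, g2]; simp; try ring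

lemma LcdcQ : ∀ n, (Lc bQ (2*n) = n ∧ dc bQ (2*n) = 2*n)
    ∧ (Lc bQ (2*n+1) = n+1 ∧ dc bQ (2*n+1) = 2*n) := by
  intro n
  induction n with
  | zero => simp [Lc, dc, Lc_succ, dc_succ, bQ]
  | succ n ih =>
    obtain ⟨⟨_, _⟩, ⟨h3, h4⟩⟩ := ih
    have e1 : 2*(n+1) = (2*n+1)+1 := by ring
    have g1 : Lc bQ (2*(n+1)) = n+1 := by
      rw [e1, Lc_succ, bQ_odd, h3]; simp
    have g2 : dc bQ (2*(n+1)) = 2*(n+1) := by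
      rw [e1, dc_succ, bQ_odd, h4]; simp; try ring
    refine ⟨⟨g1, g2⟩, ?_, ?_⟩
    · rw [Lc_succ, bQ_even, g1]; simp
    · rw [dc_succ, bQ_even, g2]; simp

lemma master (u u' : ℕ → ℝ) (z δ : ℝ) (hδ0 : 0 ≤ δ)
    (hA : ∀ n, |u n| ≤ (1+|z|) * ((z^2)^n / Nat.factorial n))
    (hA' : ∀ n, |u' n| ≤ (1+|z|) * ((z^2)^n / Nat.factorial n))
    (hB : ∀ n, |u n - u' n| ≤ (2+2*|z|) * ((2*z^2)^n / Nat.factorial n) * δ) :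
    |(∑' n, u n) - ∑' n, u' n|
      ≤ ((2+2*|z|) * (∑' n : ℕ, (2*z^2)^n / Nat.factorial n) + 1) * δ := by
  have hs1 : Summable (fun n : ℕ => (1+|z|) * ((z^2)^n / Nat.factorial n)) :=
    (Real.summable_pow_div_factorial (z^2)).mul_left _
  have hs2 : Summable (fun n : ℕ => (2+2*|z|) * ((2*z^2)^n / Nat.factorial n) * δ) :=
    ((Real.summable_pow_div_factorial (2*z^2)).mul_left _).mul_right _
  have hu : Summable u := Summable.of_norm_bounded hs1 hA
  have hu' : Summable u' := Summable.of_norm_bounded hs1 hA'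
  rw [← Summable.tsum_sub hu hu']
  have habs : Summable (fun n => ‖u n - u' n‖) := (hu.sub hu').norm
  calc |∑' n, (u n - u' n)| ≤ ∑' n, ‖u n - u' n‖ := norm_tsum_le_tsum_norm habs
    _ ≤ ∑' n, (2+2*|z|) * ((2*z^2)^n / Nat.factorial n) * δ :=
        Summable.tsum_le_tsum hB habs hs2
    _ = (2+2*|z|) * (∑' n : ℕ, (2*z^2)^n / Nat.factorial n) * δ := by
        rw [tsum_mul_right, tsum_mul_left]
    _ ≤ ((2+2*|z|) * (∑' n : ℕ, (2*z^2)^n / Nat.factorial n) + 1) * δ := by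
        have hE : 0 ≤ ∑' n : ℕ, (2*z^2)^n / Nat.factorial n :=
          tsum_nonneg fun n => by positivity
        nlinarith

lemma It_bound' (ν : Measure ℝ) [IsProbabilityMeasure ν] (b : ℕ → Bool) (m : ℕ)
    {x : ℝ} (hx : x ∈ Set.Icc (0:ℝ) 1) :
    |It ν b m x| ≤ 1 / Nat.factorial (Lc b m) := by
  rw [abs_of_nonneg (It_nonneg ν b m x)]
  refine (It_bound ν b m x hx).trans ?_
  have hfac : (0:ℝ) < Nat.factorial (Lc b m) := by positivity
  have h1 : x ^ Lc b m ≤ 1 := pow_le_one₀ hx.1 hx.2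
  exact (div_le_div_iff_of_pos_right hfac).mpr h1

lemma It_diff' (ν ν' : Measure ℝ) [IsProbabilityMeasure ν] [IsProbabilityMeasure ν']
    [NullSingletonClass ν] [NullSingletonClass ν'] (b : ℕ → Bool) (halt : ∀ n, b (n+1) = true → b n = false)
    (m : ℕ) {x : ℝ} (hx : x ∈ Set.Icc (0:ℝ) 1) :
    |It ν b m x - It ν' b m x|
      ≤ (dc b m : ℝ) * supDist (distF ν) (distF ν') * (1 / Nat.factorial (Lc b m)) := by
  refine (It_diff ν ν' b halt m x hx).trans ?_
  have hfac : (0:ℝ) < Nat.factorial (Lc b m) := by positivity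
  have hδ0 := supDist_nonneg ν ν'
  have h1 : x ^ Lc b m ≤ 1 := pow_le_one₀ hx.1 hx.2
  have h2 : (dc b m : ℝ) * supDist (distF ν) (distF ν') * x ^ Lc b m
      ≤ (dc b m : ℝ) * supDist (distF ν) (distF ν') * 1 :=
    mul_le_mul_of_nonneg_left h1 (mul_nonneg (Nat.cast_nonneg _) hδ0)
  calc (dc b m : ℝ) * supDist (distF ν) (distF ν') * x ^ Lc b m / Nat.factorial (Lc b m)
      ≤ (dc b m : ℝ) * supDist (distF ν) (distF ν') * 1 / Nat.factorial (Lc b m) :=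
        (div_le_div_iff_of_pos_right hfac).mpr h2
    _ = (dc b m : ℝ) * supDist (distF ν) (distF ν') * (1 / Nat.factorial (Lc b m)) := by
        ring


/-- Proposition 3.2: for every `z ∈ ℝ` there is a constant `c(z) > 0` depending only
on `z` (one may take `c(z) = 2(z² + |z|³)e^{z²}` for `z ≠ 0`) such that for any two
non-atomic Borel probability measures `ν, ν'` on `[0,1]`, the sup-distance on `[0,1]`
of the measure-theoretic trigonometric functions built from `ν` and `ν'` is bounded by
`c(z)·‖F − F'‖_∞`. -/
theorem stmt10 (z : ℝ) :
    ∃ c : ℝ, 0 < c ∧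
      ∀ (ν ν' : Measure ℝ), IsProbabilityMeasure ν → IsProbabilityMeasure ν' →
        NoAtoms ν → NoAtoms ν' →
        ν (Set.Icc (0:ℝ) 1)ᶜ = 0 → ν' (Set.Icc (0:ℝ) 1)ᶜ = 0 →
        ∀ x ∈ Set.Icc (0:ℝ) 1,
          |cqF ν z x - cqF ν' z x| ≤ c * supDist (distF ν) (distF ν') ∧
          |cpF ν z x - cpF ν' z x| ≤ c * supDist (distF ν) (distF ν') ∧
          |sqF ν z x - sqF ν' z x| ≤ c * supDist (distF ν) (distF ν') ∧
          |spF ν z x - spF ν' z x| ≤ c * supDist (distF ν) (distF ν') := by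
  refine ⟨(2+2*|z|) * (∑' n : ℕ, (2*z^2)^n / Nat.factorial n) + 1, ?_, ?_⟩
  · have hE : 0 ≤ ∑' n : ℕ, (2*z^2)^n / Nat.factorial n :=
      tsum_nonneg fun n => by positivity
    have h0 : 0 ≤ (2+2*|z|) * (∑' n : ℕ, (2*z^2)^n / Nat.factorial n) :=
      mul_nonneg (by positivity) hE
    linarith
  intro ν ν' h1 h2 h3 h4 _ _ x hx
  haveI := h1; haveI := h2; haveI : NullSingletonClass ν := h3; haveI : NullSingletonClass ν' := h4
  have hδ0 : 0 ≤ supDist (distF ν) (distF ν') := supDist_nonneg ν ν'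
  have h2pow : ∀ n : ℕ, ((n:ℝ)+1) ≤ 2^n := by
    intro n
    have h' : (n+1 : ℕ) ≤ 2^n := Nat.lt_two_pow_self
    calc ((n:ℝ)+1) = ((n+1:ℕ):ℝ) := by push_cast; ring
      _ ≤ ((2^n : ℕ):ℝ) := Nat.cast_le.mpr h'
      _ = 2^n := by push_cast; ring
  have habs_even : ∀ n : ℕ, |(-1:ℝ)^n * z^(2*n)| = (z^2)^n := by
    intro n
    rw [abs_mul, abs_pow, abs_pow, abs_neg, abs_one, one_pow, one_mul, pow_mul, sq_abs]
  have habs_odd : ∀ n : ℕ, |(-1:ℝ)^n * z^(2*n+1)| = |z| * (z^2)^n := by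
    intro n
    rw [abs_mul, abs_pow, abs_pow, abs_neg, abs_one, one_pow, one_mul, pow_succ, pow_mul,
      sq_abs, mul_comm]
  have hone_div : ∀ n : ℕ, (1:ℝ) / Nat.factorial (n+1) ≤ 1 / Nat.factorial n := by
    intro n
    have h1 : (0:ℝ) < Nat.factorial n := by positivity
    have h2 : (Nat.factorial n : ℝ) ≤ Nat.factorial (n+1) :=
      Nat.cast_le.mpr (Nat.factorial_le (Nat.le_succ n))
    exact one_div_le_one_div_of_le h1 h2
  refine ⟨?_, ?_, ?_, ?_⟩
  · -- cq
    unfold cqF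
    refine master _ _ z _ hδ0 ?_ ?_ ?_
    · intro n
      rw [qIter_eq, abs_mul, habs_even n]
      have hb := It_bound' ν bQ (2*n) hx
      rw [(LcdcQ n).1.1] at hb
      calc (z^2)^n * |It ν bQ (2*n) x| ≤ (z^2)^n * (1/Nat.factorial n) :=
            mul_le_mul_of_nonneg_left hb (by positivity)
        _ = 1 * ((z^2)^n/Nat.factorial n) := by ring
        _ ≤ (1+|z|) * ((z^2)^n/Nat.factorial n) :=
            mul_le_mul_of_nonneg_right (by linarith [abs_nonneg z]) (by positivity)
    · intro n
      rw [qIter_eq, abs_mul, habs_even n]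
      have hb := It_bound' ν' bQ (2*n) hx
      rw [(LcdcQ n).1.1] at hb
      calc (z^2)^n * |It ν' bQ (2*n) x| ≤ (z^2)^n * (1/Nat.factorial n) :=
            mul_le_mul_of_nonneg_left hb (by positivity)
        _ = 1 * ((z^2)^n/Nat.factorial n) := by ring
        _ ≤ (1+|z|) * ((z^2)^n/Nat.factorial n) :=
            mul_le_mul_of_nonneg_right (by linarith [abs_nonneg z]) (by positivity)
    · intro n
      have heq : (-1:ℝ)^n*z^(2*n)*qIter ν (2*n) x - (-1:ℝ)^n*z^(2*n)*qIter ν' (2*n) x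
          = (-1:ℝ)^n*z^(2*n) * (It ν bQ (2*n) x - It ν' bQ (2*n) x) := by
        rw [qIter_eq, qIter_eq]; ring
      rw [heq, abs_mul, habs_even n]
      have hd := It_diff' ν ν' bQ haltQ (2*n) hx
      rw [(LcdcQ n).1.1, (LcdcQ n).1.2] at hd
      have hn : (2*(n:ℝ)) ≤ (2+2*|z|) * 2^n := by
        have hp : (0:ℝ) ≤ 2^n - (n:ℝ) := by linarith [h2pow n]
        nlinarith [abs_nonneg z, mul_nonneg (abs_nonneg z) hp]
      calc (z^2)^n * |It ν bQ (2*n) x - It ν' bQ (2*n) x|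
          ≤ (z^2)^n * (((2*n:ℕ):ℝ) * supDist (distF ν) (distF ν') * (1/Nat.factorial n)) :=
            mul_le_mul_of_nonneg_left hd (by positivity)
        _ = (2*(n:ℝ)) * ((z^2)^n * (1/Nat.factorial n) * supDist (distF ν) (distF ν')) := by
            push_cast; ring
        _ ≤ ((2+2*|z|) * 2^n) * ((z^2)^n * (1/Nat.factorial n) * supDist (distF ν) (distF ν')) :=
            mul_le_mul_of_nonneg_right hn (mul_nonneg (by positivity) hδ0)
        _ = (2+2*|z|) * ((2*z^2)^n / Nat.factorial n) * supDist (distF ν) (distF ν') := by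
            rw [mul_pow]; ring
  · -- cp
    unfold cpF
    refine master _ _ z _ hδ0 ?_ ?_ ?_
    · intro n
      rw [pIter_eq, abs_mul, habs_even n]
      have hb := It_bound' ν bP (2*n) hx
      rw [(LcdcP n).1.1] at hb
      calc (z^2)^n * |It ν bP (2*n) x| ≤ (z^2)^n * (1/Nat.factorial n) :=
            mul_le_mul_of_nonneg_left hb (by positivity)
        _ = 1 * ((z^2)^n/Nat.factorial n) := by ring
        _ ≤ (1+|z|) * ((z^2)^n/Nat.factorial n) :=
            mul_le_mul_of_nonneg_right (by linarith [abs_nonneg z]) (by positivity)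
    · intro n
      rw [pIter_eq, abs_mul, habs_even n]
      have hb := It_bound' ν' bP (2*n) hx
      rw [(LcdcP n).1.1] at hb
      calc (z^2)^n * |It ν' bP (2*n) x| ≤ (z^2)^n * (1/Nat.factorial n) :=
            mul_le_mul_of_nonneg_left hb (by positivity)
        _ = 1 * ((z^2)^n/Nat.factorial n) := by ring
        _ ≤ (1+|z|) * ((z^2)^n/Nat.factorial n) :=
            mul_le_mul_of_nonneg_right (by linarith [abs_nonneg z]) (by positivity)
    · intro n
      have heq : (-1:ℝ)^n*z^(2*n)*pIter ν (2*n) x - (-1:ℝ)^n*z^(2*n)*pIter ν' (2*n) x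
          = (-1:ℝ)^n*z^(2*n) * (It ν bP (2*n) x - It ν' bP (2*n) x) := by
        rw [pIter_eq, pIter_eq]; ring
      rw [heq, abs_mul, habs_even n]
      have hd := It_diff' ν ν' bP haltP (2*n) hx
      rw [(LcdcP n).1.1, (LcdcP n).1.2] at hd
      have hn : (2*(n:ℝ)) ≤ (2+2*|z|) * 2^n := by
        have hp : (0:ℝ) ≤ 2^n - (n:ℝ) := by linarith [h2pow n]
        nlinarith [abs_nonneg z, mul_nonneg (abs_nonneg z) hp]
      calc (z^2)^n * |It ν bP (2*n) x - It ν' bP (2*n) x|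
          ≤ (z^2)^n * (((2*n:ℕ):ℝ) * supDist (distF ν) (distF ν') * (1/Nat.factorial n)) :=
            mul_le_mul_of_nonneg_left hd (by positivity)
        _ = (2*(n:ℝ)) * ((z^2)^n * (1/Nat.factorial n) * supDist (distF ν) (distF ν')) := by
            push_cast; ring
        _ ≤ ((2+2*|z|) * 2^n) * ((z^2)^n * (1/Nat.factorial n) * supDist (distF ν) (distF ν')) :=
            mul_le_mul_of_nonneg_right hn (mul_nonneg (by positivity) hδ0)
        _ = (2+2*|z|) * ((2*z^2)^n / Nat.factorial n) * supDist (distF ν) (distF ν') := by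
            rw [mul_pow]; ring
  · -- sq
    unfold sqF
    refine master _ _ z _ hδ0 ?_ ?_ ?_
    · intro n
      rw [qIter_eq, abs_mul, habs_odd n]
      have hb := It_bound' ν bQ (2*n+1) hx
      rw [(LcdcQ n).2.1] at hb
      calc |z| * (z^2)^n * |It ν bQ (2*n+1) x|
          ≤ |z| * (z^2)^n * (1/Nat.factorial (n+1)) :=
            mul_le_mul_of_nonneg_left hb (by positivity)
        _ ≤ |z| * (z^2)^n * (1/Nat.factorial n) :=
            mul_le_mul_of_nonneg_left (hone_div n) (by positivity)
        _ = |z| * ((z^2)^n/Nat.factorial n) := by ring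
        _ ≤ (1+|z|) * ((z^2)^n/Nat.factorial n) :=
            mul_le_mul_of_nonneg_right (by linarith [abs_nonneg z]) (by positivity)
    · intro n
      rw [qIter_eq, abs_mul, habs_odd n]
      have hb := It_bound' ν' bQ (2*n+1) hx
      rw [(LcdcQ n).2.1] at hb
      calc |z| * (z^2)^n * |It ν' bQ (2*n+1) x|
          ≤ |z| * (z^2)^n * (1/Nat.factorial (n+1)) :=
            mul_le_mul_of_nonneg_left hb (by positivity)
        _ ≤ |z| * (z^2)^n * (1/Nat.factorial n) :=
            mul_le_mul_of_nonneg_left (hone_div n) (by positivity)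
        _ = |z| * ((z^2)^n/Nat.factorial n) := by ring
        _ ≤ (1+|z|) * ((z^2)^n/Nat.factorial n) :=
            mul_le_mul_of_nonneg_right (by linarith [abs_nonneg z]) (by positivity)
    · intro n
      have heq : (-1:ℝ)^n*z^(2*n+1)*qIter ν (2*n+1) x - (-1:ℝ)^n*z^(2*n+1)*qIter ν' (2*n+1) x
          = (-1:ℝ)^n*z^(2*n+1) * (It ν bQ (2*n+1) x - It ν' bQ (2*n+1) x) := by
        rw [qIter_eq, qIter_eq]; ring
      rw [heq, abs_mul, habs_odd n]
      have hd := It_diff' ν ν' bQ haltQ (2*n+1) hx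
      rw [(LcdcQ n).2.1, (LcdcQ n).2.2] at hd
      have hn : (2*(n:ℝ))*|z| ≤ (2+2*|z|) * 2^n := by
        have hp : (0:ℝ) ≤ 2^n - (n:ℝ) := by linarith [h2pow n]
        nlinarith [abs_nonneg z, mul_nonneg (abs_nonneg z) hp, h2pow n]
      have hd' : |It ν bQ (2*n+1) x - It ν' bQ (2*n+1) x|
          ≤ ((2*n:ℕ):ℝ) * supDist (distF ν) (distF ν') * (1/Nat.factorial n) := by
        refine hd.trans ?_
        exact mul_le_mul_of_nonneg_left (hone_div n) (mul_nonneg (Nat.cast_nonneg _) hδ0)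
      calc |z| * (z^2)^n * |It ν bQ (2*n+1) x - It ν' bQ (2*n+1) x|
          ≤ |z| * (z^2)^n * (((2*n:ℕ):ℝ) * supDist (distF ν) (distF ν') * (1/Nat.factorial n)) :=
            mul_le_mul_of_nonneg_left hd' (by positivity)
        _ = (2*(n:ℝ)*|z|) * ((z^2)^n * (1/Nat.factorial n) * supDist (distF ν) (distF ν')) := by
            push_cast; ring
        _ ≤ ((2+2*|z|) * 2^n) * ((z^2)^n * (1/Nat.factorial n) * supDist (distF ν) (distF ν')) :=
            mul_le_mul_of_nonneg_right hn (mul_nonneg (by positivity) hδ0)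
        _ = (2+2*|z|) * ((2*z^2)^n / Nat.factorial n) * supDist (distF ν) (distF ν') := by
            rw [mul_pow]; ring
  · -- sp
    unfold spF
    refine master _ _ z _ hδ0 ?_ ?_ ?_
    · intro n
      rw [pIter_eq, abs_mul, habs_odd n]
      have hb := It_bound' ν bP (2*n+1) hx
      rw [(LcdcP n).2.1] at hb
      calc |z| * (z^2)^n * |It ν bP (2*n+1) x|
          ≤ |z| * (z^2)^n * (1/Nat.factorial n) :=
            mul_le_mul_of_nonneg_left hb (by positivity)
        _ = |z| * ((z^2)^n/Nat.factorial n) := by ring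
        _ ≤ (1+|z|) * ((z^2)^n/Nat.factorial n) :=
            mul_le_mul_of_nonneg_right (by linarith [abs_nonneg z]) (by positivity)
    · intro n
      rw [pIter_eq, abs_mul, habs_odd n]
      have hb := It_bound' ν' bP (2*n+1) hx
      rw [(LcdcP n).2.1] at hb
      calc |z| * (z^2)^n * |It ν' bP (2*n+1) x|
          ≤ |z| * (z^2)^n * (1/Nat.factorial n) :=
            mul_le_mul_of_nonneg_left hb (by positivity)
        _ = |z| * ((z^2)^n/Nat.factorial n) := by ring
        _ ≤ (1+|z|) * ((z^2)^n/Nat.factorial n) :=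
            mul_le_mul_of_nonneg_right (by linarith [abs_nonneg z]) (by positivity)
    · intro n
      have heq : (-1:ℝ)^n*z^(2*n+1)*pIter ν (2*n+1) x - (-1:ℝ)^n*z^(2*n+1)*pIter ν' (2*n+1) x
          = (-1:ℝ)^n*z^(2*n+1) * (It ν bP (2*n+1) x - It ν' bP (2*n+1) x) := by
        rw [pIter_eq, pIter_eq]; ring
      rw [heq, abs_mul, habs_odd n]
      have hd := It_diff' ν ν' bP haltP (2*n+1) hx
      rw [(LcdcP n).2.1, (LcdcP n).2.2] at hd
      have hn : ((2*(n:ℝ)+2))*|z| ≤ (2+2*|z|) * 2^n := by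
        have hp : (0:ℝ) ≤ 2^n - ((n:ℝ)+1) := by linarith [h2pow n]
        nlinarith [abs_nonneg z, mul_nonneg (abs_nonneg z) hp, h2pow n]
      calc |z| * (z^2)^n * |It ν bP (2*n+1) x - It ν' bP (2*n+1) x|
          ≤ |z| * (z^2)^n * (((2*n+2:ℕ):ℝ) * supDist (distF ν) (distF ν') * (1/Nat.factorial n)) :=
            mul_le_mul_of_nonneg_left hd (by positivity)
        _ = ((2*(n:ℝ)+2)*|z|) * ((z^2)^n * (1/Nat.factorial n) * supDist (distF ν) (distF ν')) := by
            push_cast; ring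
        _ ≤ ((2+2*|z|) * 2^n) * ((z^2)^n * (1/Nat.factorial n) * supDist (distF ν) (distF ν')) :=
            mul_le_mul_of_nonneg_right hn (mul_nonneg (by positivity) hδ0)
        _ = (2+2*|z|) * ((2*z^2)^n / Nat.factorial n) * supDist (distF ν) (distF ν') := by
            rw [mul_pow]; ring
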